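/- arXiv:1812.11098 — 3 statements merged into one kernel-verified Lean document; each statement's English description precedes it below -/
import Mathlib

section
/- If G is a connected graph on n ≥ 2 vertices, then the domination number of G is at most n/2, unless G is a single edge (K₂), in which case the domination number is 1 = n/2. In particular, for every connected graph G on n ≥ 2 vertices, the domination number of G is at most n/2. -/
open SimpleGraph

variable {V : Type*}

/-- The closed neighbourhood `N[D]` of a set `D` of vertices of `G`. -/
def closedNbhd (G : SimpleGraph V) (D : Set V) : Set V :=
  {w | ∃ d ∈ D, w = d ∨ G.Adj d w}

/-- `D` is a `k`-clique isolating set of `G` if `G − N[D]` contains no `k`-clique. -/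
def IsKCliqueIsolating (G : SimpleGraph V) (k : ℕ) (D : Set V) : Prop :=
  ∀ s : Finset ((closedNbhd G D)ᶜ : Set V), ¬ (G.induce (closedNbhd G D)ᶜ).IsNClique k s

/-- `ι(G,k)`: the minimum size of a `k`-clique isolating set of `G`. -/
noncomputable def iso (G : SimpleGraph V) (k : ℕ) : ℕ :=
  sInf {m | ∃ D : Set V, IsKCliqueIsolating G k D ∧ D.ncard = m}

/-- The domination number of `G`. -/
noncomputable def domNum (G : SimpleGraph V) : ℕ :=
  sInf {m | ∃ D : Set V, closedNbhd G D = Set.univ ∧ D.ncard = m}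

/-- Every vertex at positive distance from `r` has a neighbour one step closer to `r`. -/
lemma exists_adj_dist_pred (G : SimpleGraph V) (hconn : G.Connected) (r v : V)
    (hv : G.dist r v ≠ 0) : ∃ u, G.Adj u v ∧ G.dist r u + 1 = G.dist r v := by
  obtain ⟨p, hp⟩ := hconn.exists_walk_length_eq_dist r v
  have hne : r ≠ v := by
    rintro rfl
    simp at hv
  -- take the last edge of `p`
  have := p.reverse
  rcases hq : p.reverse with _ | ⟨h, q⟩
  · exfalso
    apply hv
    have hlen0 := congrArg Walk.length hq
    simp only [Walk.length_reverse, Walk.length_nil] at hlen0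
    omega
  · rename_i u
    refine ⟨u, h.symm, ?_⟩
    have hlen : q.length + 1 = G.dist r v := by
      have := congrArg Walk.length hq
      simp only [Walk.length_reverse, Walk.length_cons] at this
      omega
    have h1 : G.dist r u ≤ q.length := by
      have := SimpleGraph.dist_le q.reverse
      simpa using this
    have h2 : G.dist r v ≤ G.dist r u + 1 := by
      calc G.dist r v ≤ G.dist r u + G.dist u v := hconn.dist_triangle
        _ ≤ G.dist r u + 1 := by
            have : G.dist u v ≤ 1 := by
              rw [← SimpleGraph.dist_eq_one_iff_adj.mpr h.symm]
            omega
    omega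

theorem stmt6 [Fintype V] (G : SimpleGraph V) (n : ℕ) (hn : Fintype.card V = n)
    (h2 : 2 ≤ n) (hconn : G.Connected) :
    (Nonempty (G ≃g (⊤ : SimpleGraph (Fin 2))) → domNum G = 1 ∧ (1 : ℚ) = n / 2) ∧
    (domNum G : ℚ) ≤ n / 2 := by
  have hnontriv : 1 < Fintype.card V := by omega
  obtain ⟨r, v0, hrv0⟩ := Fintype.exists_pair_of_one_lt_card hnontriv
  set A : Set V := {v | Even (G.dist r v)} with hA
  -- A dominates
  have hAdom : closedNbhd G A = Set.univ := by
    ext w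
    simp only [Set.mem_univ, iff_true]
    by_cases hw : Even (G.dist r w)
    · exact ⟨w, hw, Or.inl rfl⟩
    · have h0 : G.dist r w ≠ 0 := by
        intro h; rw [h] at hw; exact hw (Even.zero)
      obtain ⟨u, hadj, hd⟩ := exists_adj_dist_pred G hconn r w h0
      refine ⟨u, ?_, Or.inr hadj⟩
      show Even (G.dist r u)
      rw [Nat.even_iff] at *
      omega
  -- Aᶜ dominates
  have hBdom : closedNbhd G Aᶜ = Set.univ := by
    ext w
    simp only [Set.mem_univ, iff_true]
    by_cases hw : Even (G.dist r w)
    · rcases Nat.eq_zero_or_pos (G.dist r w) with h0 | hpos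
      · -- w = r; find a neighbour of r
        have hwr : r = w := (hconn.dist_eq_zero_iff).mp h0
        subst hwr
        obtain ⟨p⟩ := hconn r v0
        rcases p with _ | ⟨h, q⟩
        · exact absurd rfl hrv0
        · rename_i u
          refine ⟨u, ?_, Or.inr h.symm⟩
          show ¬ Even (G.dist r u)
          have : G.dist r u = 1 := SimpleGraph.dist_eq_one_iff_adj.mpr h
          rw [this]; decide
      · obtain ⟨u, hadj, hd⟩ := exists_adj_dist_pred G hconn r w (by omega)
        refine ⟨u, ?_, Or.inr hadj⟩
        show ¬ Even (G.dist r u)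
        rw [Nat.even_iff] at *
        omega
    · exact ⟨w, hw, Or.inl rfl⟩
  have hAfin : A.Finite := Set.toFinite A
  have hsum : A.ncard + Aᶜ.ncard = n := by
    rw [Set.ncard_add_ncard_compl]; simpa using hn
  have hdle : ∀ D : Set V, closedNbhd G D = Set.univ → domNum G ≤ D.ncard := by
    intro D hD
    exact Nat.sInf_le ⟨D, hD, rfl⟩
  have hbound : 2 * domNum G ≤ n := by
    have h1 := hdle A hAdom
    have h2 := hdle Aᶜ hBdom
    omega
  have hmain : (domNum G : ℚ) ≤ n / 2 := by
    rw [le_div_iff₀ (by norm_num : (0:ℚ) < 2)]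
    have : ((2 * domNum G : ℕ) : ℚ) ≤ (n : ℚ) := by exact_mod_cast hbound
    push_cast at this ⊢
    linarith
  refine ⟨?_, hmain⟩
  rintro ⟨e⟩
  have hn2 : n = 2 := by
    rw [← hn, ← Fintype.card_fin 2]
    exact Fintype.card_congr e.toEquiv
  constructor
  · -- domNum = 1
    have hub : domNum G ≤ 1 := by
      have : closedNbhd G {r} = Set.univ := by
        ext w
        simp only [Set.mem_univ, iff_true]
        refine ⟨r, rfl, ?_⟩
        by_cases hwr : w = r
        · exact Or.inl hwr
        · refine Or.inr ?_
          have : (⊤ : SimpleGraph (Fin 2)).Adj (e r) (e w) := by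
            simp only [top_adj, ne_eq]
            intro hcon
            exact hwr (e.toEquiv.injective hcon).symm
          exact e.map_rel_iff.mp this
      have := hdle _ this
      simpa using this
    have hlb : domNum G ≠ 0 := by
      intro h0
      have hne : {m | ∃ D : Set V, closedNbhd G D = Set.univ ∧ D.ncard = m}.Nonempty :=
        ⟨A.ncard, A, hAdom, rfl⟩
      have h0mem : 0 ∈ {m | ∃ D : Set V, closedNbhd G D = Set.univ ∧ D.ncard = m} := by
        rw [← h0]
        exact Nat.sInf_mem hne
      obtain ⟨D, hD, hDc⟩ := h0mem
      have hDe : D = ∅ := (Set.ncard_eq_zero (Set.toFinite D)).mp hDc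
      subst hDe
      have : r ∈ closedNbhd G (∅ : Set V) := hD ▸ Set.mem_univ r
      obtain ⟨d, hd, -⟩ := this
      exact hd
    omega
  · rw [hn2]; norm_num
end

section
/- For every positive integer k and every n that is a positive multiple of k+1, there exists a connected n-vertex graph G that is not a k-clique (and, if k = 2, not a 5-cycle) with ι(G,k) = n/(k+1). -/
open SimpleGraph

variable {V : Type*}

/-!
Write `n = (k+1)m` and let `B` be `m` copies of `K_{k+1}` plus a path through one vertex of each.
The path vertices dominate `B`, so `ι(B,k) ≤ m`. Conversely, `G − N[D]` keeps a `k`-clique `C`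
exactly when `D` misses `N[C]`; the other `k` vertices of each copy form such a clique `C` with
`N[C]` inside the copy, so `D` meets every copy and `ι(B,k) ≥ m`.
-/

section IsolatingSets

variable {W : Type*} {G : SimpleGraph V} {H : SimpleGraph W} {k : ℕ}

lemma exists_mem_closedNbhd_comm {S T : Set V} :
    (∃ v ∈ S, v ∈ closedNbhd G T) ↔ ∃ w ∈ T, w ∈ closedNbhd G S := by
  constructor <;>
  · rintro ⟨v, hv, w, hw, rfl | hadj⟩
    exacts [⟨v, hw, v, hv, Or.inl rfl⟩, ⟨w, hw, v, hv, Or.inr hadj.symm⟩]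

lemma isKCliqueIsolating_iff {D : Set V} :
    IsKCliqueIsolating G k D ↔
      ∀ s : Finset V, G.IsNClique k s → ∃ v ∈ s, v ∈ closedNbhd G D := by
  classical
  simp only [IsKCliqueIsolating, isNClique_induce_iff]
  constructor
  · intro hD s hs
    by_contra! hdisj
    refine hD (s.subtype (· ∈ (closedNbhd G D)ᶜ)) ?_
    rwa [Finset.subtype_map_of_mem (p := (· ∈ (closedNbhd G D)ᶜ)) hdisj]
  · rintro hD t ht
    obtain ⟨v, hv, hvD⟩ := hD _ ht
    obtain ⟨w, -, rfl⟩ := Finset.mem_map.mp hv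
    exact w.2 hvD

lemma isKCliqueIsolating_of_closedNbhd_eq_univ {D : Set V} (hk : k ≠ 0)
    (hD : closedNbhd G D = Set.univ) : IsKCliqueIsolating G k D := by
  refine isKCliqueIsolating_iff.mpr fun s hs => ?_
  obtain ⟨v, hv⟩ := Finset.card_pos.mp (hs.card_eq ▸ Nat.pos_of_ne_zero hk)
  exact ⟨v, hv, hD ▸ Set.mem_univ v⟩

lemma card_le_ncard_of_isKCliqueIsolating {ι : Type*} {C : ι → Finset V}
    (hC : ∀ i, G.IsNClique k (C i))
    (hdisj : Pairwise fun i j => Disjoint (closedNbhd G (C i)) (closedNbhd G (C j)))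
    {D : Set V} (hfin : D.Finite) (hD : IsKCliqueIsolating G k D) : Nat.card ι ≤ D.ncard := by
  have hmeet (i : ι) : ∃ d ∈ D, d ∈ closedNbhd G (C i) :=
    exists_mem_closedNbhd_comm.mp (isKCliqueIsolating_iff.mp hD _ (hC i))
  choose d hdD hdC using hmeet
  have hinj : Function.Injective d := fun i j hij => by
    by_contra hne
    exact Set.disjoint_left.mp (hdisj hne) (hdC i) (hij ▸ hdC j)
  rw [← Set.ncard_range_of_injective hinj]
  exact Set.ncard_le_ncard (Set.range_subset_iff.mpr hdD) hfin

lemma iso_eq_ncard {D : Set V} (hD : IsKCliqueIsolating G k D)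
    (hmin : ∀ D', IsKCliqueIsolating G k D' → D.ncard ≤ D'.ncard) : iso G k = D.ncard :=
  le_antisymm (Nat.sInf_le ⟨D, hD, rfl⟩) <|
    le_csInf ⟨_, D, hD, rfl⟩ fun _ ⟨D', hD', hcard⟩ => hcard ▸ hmin D' hD'

lemma SimpleGraph.Iso.image_closedNbhd (e : G ≃g H) (D : Set V) :
    e '' closedNbhd G D = closedNbhd H (e '' D) := by
  ext w
  simp only [closedNbhd, Set.mem_image, Set.mem_ofPred_eq]
  constructor
  · rintro ⟨v, ⟨d, hd, hvd⟩, rfl⟩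
    exact ⟨e d, ⟨d, hd, rfl⟩, hvd.imp (congrArg e) e.map_adj_iff.mpr⟩
  · rintro ⟨_, ⟨d, hd, rfl⟩, hwd⟩
    refine ⟨e.symm w, ⟨d, hd, ?_⟩, e.apply_symm_apply w⟩
    exact hwd.imp (fun h => by simp [h]) fun h => by simpa using e.symm.map_adj_iff.mpr h

lemma SimpleGraph.Iso.isNClique_map (e : G ≃g H) {s : Finset V} (hs : G.IsNClique k s) :
    H.IsNClique k (s.map e.toEquiv.toEmbedding) := by
  refine ⟨?_, by simp [hs.card_eq]⟩
  rw [Finset.coe_map]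
  rintro _ ⟨v, hv, rfl⟩ _ ⟨w, hw, rfl⟩ hvw
  exact e.map_adj_iff.mpr (hs.isClique hv hw fun h => hvw (h ▸ rfl))

lemma SimpleGraph.Iso.isKCliqueIsolating_image (e : G ≃g H) {D : Set V}
    (hD : IsKCliqueIsolating G k D) : IsKCliqueIsolating H k (e '' D) := by
  refine isKCliqueIsolating_iff.mpr fun t ht => ?_
  obtain ⟨v, hv, hvD⟩ := isKCliqueIsolating_iff.mp hD _ (e.symm.isNClique_map ht)
  obtain ⟨w, hw, rfl⟩ := Finset.mem_map.mp hv
  refine ⟨w, hw, ?_⟩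
  rw [← e.image_closedNbhd]
  exact ⟨_, hvD, e.apply_symm_apply w⟩

lemma SimpleGraph.Iso.iso_eq (e : G ≃g H) : iso G k = iso H k := by
  unfold iso
  congr 1
  ext m
  constructor
  · rintro ⟨D, hD, rfl⟩
    exact ⟨e '' D, e.isKCliqueIsolating_image hD, Set.ncard_image_of_injective D e.injective⟩
  · rintro ⟨D, hD, rfl⟩
    exact ⟨e.symm '' D, e.symm.isKCliqueIsolating_image hD,
      Set.ncard_image_of_injective D e.symm.injective⟩

end IsolatingSets

section BlockPath

variable {k m : ℕ}

/-- The graph `B_{(k+1)m,k}`: block `i` is `{i} × Fin (k + 1)`, a copy of `K_k` joined to the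
vertex `(i, last)`, and these last vertices form a path. -/
def blockPath (k m : ℕ) : SimpleGraph (Fin m × Fin (k + 1)) :=
  fromRel fun v w => v.1 = w.1 ∨ v.2 = Fin.last k ∧ w.2 = Fin.last k ∧ (pathGraph m).Adj v.1 w.1

lemma blockPath_adj_of_fst_eq {v w : Fin m × Fin (k + 1)} (hne : v ≠ w) (h : v.1 = w.1) :
    (blockPath k m).Adj v w :=
  (fromRel_adj _ v w).mpr ⟨hne, Or.inl (Or.inl h)⟩

lemma fst_eq_of_blockPath_adj {v w : Fin m × Fin (k + 1)} (hadj : (blockPath k m).Adj v w)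
    (hv : v.2 ≠ Fin.last k) : v.1 = w.1 := by
  rcases ((fromRel_adj _ v w).mp hadj).2 with (h | h) | h | h
  exacts [h, absurd h.1 hv, h.symm, absurd h.2.1 hv]

def spine (k m : ℕ) : pathGraph m →g blockPath k m where
  toFun i := (i, Fin.last k)
  map_rel' h := (fromRel_adj _ _ _).mpr
    ⟨fun hij => h.ne (congrArg Prod.fst hij), Or.inl (Or.inr ⟨rfl, rfl, h⟩)⟩

lemma spine_injective : Function.Injective (spine k m) :=
  fun _ _ h => congrArg Prod.fst h

lemma closedNbhd_range_spine :
    closedNbhd (blockPath k m) (Set.range (spine k m)) = Set.univ := by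
  refine Set.eq_univ_of_forall fun v => ⟨spine k m v.1, ⟨v.1, rfl⟩, ?_⟩
  by_cases hv : v = spine k m v.1
  · exact Or.inl hv
  · exact Or.inr (blockPath_adj_of_fst_eq (Ne.symm hv) rfl)

lemma blockPath_connected (hm : 0 < m) : (blockPath k m).Connected := by
  have : Nonempty (Fin m × Fin (k + 1)) := ⟨(⟨0, hm⟩, 0)⟩
  have hspine (v : Fin m × Fin (k + 1)) : (blockPath k m).Reachable v (spine k m v.1) := by
    by_cases hv : v = spine k m v.1
    · exact hv ▸ Reachable.refl _
    · exact (blockPath_adj_of_fst_eq hv rfl).reachable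
  refine ⟨fun v w => (hspine v).trans (Reachable.trans ?_ (hspine w).symm)⟩
  exact (pathGraph_preconnected m v.1 w.1).map (spine k m)

def blockClique (k : ℕ) (i : Fin m) : Finset (Fin m × Fin (k + 1)) :=
  Finset.univ.map (Fin.castSuccEmb.trans (Function.Embedding.sectR i _))

lemma blockClique_isNClique (i : Fin m) : (blockPath k m).IsNClique k (blockClique k i) := by
  refine ⟨?_, by simp [blockClique]⟩
  rw [blockClique, Finset.coe_map]
  rintro _ ⟨_, -, rfl⟩ _ ⟨_, -, rfl⟩ hne
  exact blockPath_adj_of_fst_eq hne rfl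

lemma closedNbhd_blockClique_subset (i : Fin m) :
    closedNbhd (blockPath k m) (blockClique k i) ⊆ {w | w.1 = i} := by
  rintro w ⟨_, hc, rfl | hadj⟩
  all_goals obtain ⟨j, -, rfl⟩ := Finset.mem_map.mp hc
  · rfl
  · exact (fst_eq_of_blockPath_adj hadj (Fin.castSucc_lt_last j).ne).symm

lemma iso_blockPath (hk : k ≠ 0) : iso (blockPath k m) k = m := by
  have hspine : (Set.range (spine k m)).ncard = m := by
    rw [Set.ncard_range_of_injective spine_injective, Nat.card_fin]
  have hupper : IsKCliqueIsolating (blockPath k m) k (Set.range (spine k m)) :=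
    isKCliqueIsolating_of_closedNbhd_eq_univ hk closedNbhd_range_spine
  rw [iso_eq_ncard hupper fun D hD => ?_, hspine]
  have hdisj : Pairwise fun i j =>
      Disjoint (closedNbhd (blockPath k m) (blockClique k i))
        (closedNbhd (blockPath k m) (blockClique k j)) := fun i j hij =>
    Disjoint.mono (closedNbhd_blockClique_subset i) (closedNbhd_blockClique_subset j) <|
      Set.disjoint_left.mpr fun w (hi : w.1 = i) (hj : w.1 = j) => hij (hi.symm.trans hj)
  simpa [hspine] using
    card_le_ncard_of_isKCliqueIsolating blockClique_isNClique hdisj (Set.toFinite D) hD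

end BlockPath

theorem stmt11 (k n : ℕ) (hk : 0 < k) (hn : 0 < n) (hdvd : (k + 1) ∣ n) :
    ∃ G : SimpleGraph (Fin n), G.Connected ∧
      ¬ Nonempty (G ≃g (⊤ : SimpleGraph (Fin k))) ∧
      (k = 2 → ¬ Nonempty (G ≃g cycleGraph 5)) ∧
      iso G k = n / (k + 1) := by
  obtain ⟨m, rfl⟩ := hdvd
  have hm : 0 < m := Nat.pos_of_mul_pos_left hn
  have hcard : Fintype.card (Fin m × Fin (k + 1)) = (k + 1) * m := by simp [mul_comm]
  let e := (blockPath k m).overFinIso hcard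
  refine ⟨_, e.connected_iff.mp (blockPath_connected hm), ?_, ?_, ?_⟩
  · rintro ⟨f⟩
    have : (k + 1) * m = k := by simpa using Fintype.card_congr f.toEquiv
    nlinarith
  · rintro rfl ⟨f⟩
    have : 3 * m = 5 := by simpa using Fintype.card_congr f.toEquiv
    omega
  · rw [← e.iso_eq, iso_blockPath hk.ne', Nat.mul_div_cancel_left m k.succ_pos]
end

section
/- Let n, k be positive integers with n ≥ k+1, let a = ⌊n/(k+1)⌋ and b = n − k·a, and let B_{n,k} be the graph obtained from a path P_b on vertex set [b] and vertex-disjoint k-cliques F₁, …, F_a by joining vertex i of the path to every vertex of F_i for each i ∈ [a]. Then ι(B_{n,k}, k) = ⌊n/(k+1)⌋. -/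
open SimpleGraph

variable {V : Type*}

/-- The graph `B_{n,k}`: a path on `b = n - k⌊n/(k+1)⌋` vertices together with
`a = ⌊n/(k+1)⌋` disjoint `k`-cliques, the `i`-th clique fully joined to vertex `i` of the path. -/
def Bgraph (n k : ℕ) : SimpleGraph (Fin (n - k * (n / (k + 1))) ⊕ Fin (n / (k + 1)) × Fin k) :=
  SimpleGraph.fromRel (fun x y =>
    match x, y with
    | Sum.inl i, Sum.inl j => (i : ℕ) + 1 = (j : ℕ)
    | Sum.inl i, Sum.inr p => (i : ℕ) = (p.1 : ℕ)
    | Sum.inr p, Sum.inr q => p.1 = q.1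
    | _, _ => False)

/-!
Write `a = ⌊n/(k+1)⌋`, so the path has `b = a + (n mod (k+1))` vertices. The path vertices
`0, …, a-1` dominate every clique `F_i` and the path up to vertex `a`; the at most `k - 1` path
vertices left over cannot contain a `k`-clique. Conversely, `N[F_i] = F_i ∪ {i}`, so these closed
neighbourhoods are pairwise disjoint, and an isolating set must meet each of them, since otherwise
`F_i` survives in `G − N[D]`.
-/

section Isolation

variable {G : SimpleGraph V} {k : ℕ} {D : Set V}

theorem IsKCliqueIsolating.exists_mem_closedNbhd (hD : IsKCliqueIsolating G k D) {s : Finset V}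
    (hs : G.IsNClique k s) : ∃ d ∈ D, d ∈ closedNbhd G s := by
  classical
  by_contra! h
  have hs_out : ∀ x ∈ s, x ∈ (closedNbhd G D)ᶜ := by
    rintro x hx ⟨d, hdD, rfl | hadj⟩
    · exact h x hdD ⟨x, hx, Or.inl rfl⟩
    · exact h d hdD ⟨x, hx, Or.inr hadj.symm⟩
  refine hD (s.subtype (· ∈ (closedNbhd G D)ᶜ)) ?_
  rwa [isNClique_induce_iff, Finset.subtype_map_of_mem hs_out]

open Function in
theorem IsKCliqueIsolating.card_le_ncard [Finite V] {ι : Type*} (hD : IsKCliqueIsolating G k D)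
    (F : ι → Finset V) (hF : ∀ i, G.IsNClique k (F i))
    (hdisj : Pairwise (Disjoint on fun i => closedNbhd G (F i))) : Nat.card ι ≤ D.ncard := by
  choose d hdD hdF using fun i => hD.exists_mem_closedNbhd (hF i)
  have hinj : d.Injective := fun i j hij =>
    hdisj.eq (Set.not_disjoint_iff.2 ⟨d i, hdF i, hij ▸ hdF j⟩)
  rw [← Set.ncard_range_of_injective hinj]
  exact Set.ncard_le_ncard (Set.range_subset_iff.2 hdD)

theorem isKCliqueIsolating_of_ncard_compl_lt [Finite V] (h : (closedNbhd G D)ᶜ.ncard < k) :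
    IsKCliqueIsolating G k D := by
  intro s hs
  have hs_card : s.card ≤ (closedNbhd G D)ᶜ.ncard := by
    rw [← Set.ncard_coe_finset, ← Nat.card_coe_set_eq]
    exact Set.ncard_le_card _
  exact absurd h (hs.card_eq ▸ hs_card).not_gt

theorem iso_eq_of_isLeast {m : ℕ} (hm : ∃ D, IsKCliqueIsolating G k D ∧ D.ncard = m)
    (hle : ∀ D, IsKCliqueIsolating G k D → m ≤ D.ncard) : iso G k = m :=
  IsLeast.csInf_eq ⟨hm, fun _ ⟨D, hD, hD_card⟩ => hD_card ▸ hle D hD⟩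

end Isolation

theorem sub_mul_div_eq_div_add_mod (n k : ℕ) :
    n - k * (n / (k + 1)) = n / (k + 1) + n % (k + 1) := by
  have h := Nat.div_add_mod n (k + 1)
  rw [add_mul, one_mul] at h
  generalize n / (k + 1) = a at h ⊢
  generalize n % (k + 1) = r at h ⊢
  omega

theorem div_le_sub_mul_div (n k : ℕ) : n / (k + 1) ≤ n - k * (n / (k + 1)) := by
  rw [sub_mul_div_eq_div_add_mod]
  exact Nat.le_add_right _ _

namespace Bgraph

abbrev Vertex (n k : ℕ) : Type := Fin (n - k * (n / (k + 1))) ⊕ Fin (n / (k + 1)) × Fin k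

variable {n k : ℕ}

@[simp] theorem adj_inl_inl {i j : Fin (n - k * (n / (k + 1)))} :
    (Bgraph n k).Adj (.inl i) (.inl j) ↔ (i : ℕ) + 1 = j ∨ (j : ℕ) + 1 = i := by
  simp only [Bgraph, fromRel_adj, ne_eq, Sum.inl.injEq, Fin.ext_iff]
  omega

@[simp] theorem adj_inl_inr {i : Fin (n - k * (n / (k + 1)))} {p : Fin (n / (k + 1)) × Fin k} :
    (Bgraph n k).Adj (.inl i) (.inr p) ↔ (i : ℕ) = p.1 := by
  simp [Bgraph]

@[simp] theorem adj_inr_inl {i : Fin (n - k * (n / (k + 1)))} {p : Fin (n / (k + 1)) × Fin k} :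
    (Bgraph n k).Adj (.inr p) (.inl i) ↔ (i : ℕ) = p.1 := by
  simp [Bgraph]

@[simp] theorem adj_inr_inr {p q : Fin (n / (k + 1)) × Fin k} :
    (Bgraph n k).Adj (.inr p) (.inr q) ↔ p ≠ q ∧ p.1 = q.1 := by
  simp only [Bgraph, fromRel_adj, ne_eq, Sum.inr.injEq, eq_comm (a := q.1), or_self]

def clique (i : Fin (n / (k + 1))) : Finset (Vertex n k) :=
  Finset.univ.map ((Function.Embedding.sectR i (Fin k)).trans .inr)

theorem coe_clique (i : Fin (n / (k + 1))) :
    (clique i : Set (Vertex n k)) = Set.range fun j => .inr (i, j) := by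
  simp [clique]

theorem isNClique_clique (i : Fin (n / (k + 1))) : (Bgraph n k).IsNClique k (clique i) := by
  refine ⟨?_, by simp [clique]⟩
  rw [coe_clique]
  rintro _ ⟨j, rfl⟩ _ ⟨j', rfl⟩ hjj'
  simpa using hjj'

theorem index_eq_of_mem_closedNbhd_clique {i : Fin (n / (k + 1))}
    {x : Vertex n k}
    (hx : x ∈ closedNbhd (Bgraph n k) (clique i)) : Sum.elim Fin.val (fun p => p.1.val) x = i := by
  obtain ⟨_, hc, hx⟩ := hx
  rw [coe_clique] at hc
  obtain ⟨j, rfl⟩ := hc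
  rcases x with v | q
  · simpa using hx
  · simp only [Sum.inr.injEq, adj_inr_inr] at hx
    rcases hx with rfl | ⟨-, rfl⟩ <;> rfl

open Function in
theorem pairwise_disjoint_closedNbhd_clique :
    Pairwise (Disjoint on fun i : Fin (n / (k + 1)) => closedNbhd (Bgraph n k) (clique i)) :=
  fun _ _ hii' => Set.disjoint_left.2 fun _ hi hi' =>
    hii' (Fin.ext ((index_eq_of_mem_closedNbhd_clique hi).symm.trans
      (index_eq_of_mem_closedNbhd_clique hi')))

def pathPrefix (n k : ℕ) : Set (Vertex n k) :=
  Set.range fun i : Fin (n / (k + 1)) => .inl (Fin.castLE (div_le_sub_mul_div n k) i)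

theorem ncard_pathPrefix : (pathPrefix n k).ncard = n / (k + 1) := by
  rw [pathPrefix, Set.ncard_range_of_injective, Nat.card_fin]
  exact Sum.inl_injective.comp (Fin.castLE_injective _)

theorem compl_closedNbhd_pathPrefix_subset (hn : k + 1 ≤ n) :
    (closedNbhd (Bgraph n k) (pathPrefix n k))ᶜ ⊆ .inl '' {v | n / (k + 1) < (v : ℕ)} := by
  have ha : 1 ≤ n / (k + 1) := (Nat.one_le_div_iff (by omega)).2 hn
  intro x hx
  contrapose! hx
  rw [Set.notMem_compl_iff]
  rcases x with v | p
  · have hv : (v : ℕ) ≤ n / (k + 1) := by simpa using hx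
    rcases hv.lt_or_eq with hv | hv
    · exact ⟨.inl v, ⟨⟨v, hv⟩, rfl⟩, Or.inl rfl⟩
    · exact ⟨_, ⟨⟨n / (k + 1) - 1, by omega⟩, rfl⟩, Or.inr (by simp only [Fin.castLE_mk, adj_inl_inl]; omega)⟩
  · exact ⟨_, ⟨p.1, rfl⟩, Or.inr (by simp)⟩

theorem ncard_compl_closedNbhd_pathPrefix_lt (hk : 0 < k) (hn : k + 1 ≤ n) :
    (closedNbhd (Bgraph n k) (pathPrefix n k))ᶜ.ncard < k := by
  refine (Set.ncard_le_ncard (compl_closedNbhd_pathPrefix_subset hn)).trans_lt ?_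
  rw [Set.ncard_image_of_injective _ Sum.inl_injective]
  calc _ ≤ (Set.Ioo (n / (k + 1)) (n - k * (n / (k + 1)))).ncard :=
        Set.ncard_le_ncard_of_injOn Fin.val (fun v hv => ⟨hv, v.isLt⟩) Fin.val_injective.injOn
    _ < k := by
      rw [Set.ncard_Ioo_nat, sub_mul_div_eq_div_add_mod]
      have := Nat.mod_lt n k.add_one_pos
      omega

end Bgraph

theorem stmt12 (n k : ℕ) (hk : 0 < k) (hn : k + 1 ≤ n) :
    iso (Bgraph n k) k = n / (k + 1) := by
  refine iso_eq_of_isLeast ⟨Bgraph.pathPrefix n k, isKCliqueIsolating_of_ncard_compl_lt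
    (Bgraph.ncard_compl_closedNbhd_pathPrefix_lt hk hn), Bgraph.ncard_pathPrefix⟩ fun D hD => ?_
  simpa using hD.card_le_ncard Bgraph.clique Bgraph.isNClique_clique
    Bgraph.pairwise_disjoint_closedNbhd_clique
end
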